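/- arXiv:1512.07296 — 2 statements merged into one kernel-verified Lean document; each statement's English description precedes it below -/
import Mathlib

section
/- If T: C → C is a nonexpansive mapping on a nonempty closed convex subset C of a real Hilbert space, then I − T is demiclosed: whenever a sequence {xₙ} in C converges weakly to x ∈ C and {xₙ − T xₙ} converges strongly to y, then x − T x = y. -/
/-!
Put `u = x̄ - T x̄ - y`. Nonexpansiveness gives
`‖(xₙ - x̄) + u‖ = ‖(xₙ - T xₙ - y) + (T xₙ - T x̄)‖ ≤ εₙ + ‖xₙ - x̄‖`
with `εₙ = ‖xₙ - T xₙ - y‖ → 0`.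
Expanding the square on the left, the terms `‖xₙ - x̄‖²` cancel and
`2⟪xₙ - x̄, u⟫ + ‖u‖² ≤ 2 εₙ ‖xₙ - x̄‖ + εₙ²`. The weakly convergent sequence is bounded
(uniform boundedness), so the right side tends to `0` while the left tends to `‖u‖²`.
-/

open Filter Topology

theorem isBoundedUnder_norm_of_tendsto_inner {𝕜 E : Type*} [RCLike 𝕜] [NormedAddCommGroup E]
    [InnerProductSpace 𝕜 E] [CompleteSpace E] {x : ℕ → E} {a : E}
    (h : ∀ w, Tendsto (fun n => inner 𝕜 (x n) w) atTop (𝓝 (inner 𝕜 a w))) :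
    IsBoundedUnder (· ≤ ·) atTop (fun n => ‖x n‖) := by
  have hpointwise : ∀ w, ∃ C, ∀ n, ‖innerSL 𝕜 (x n) w‖ ≤ C := fun w =>
    (Metric.isBounded_range_of_tendsto _ (h w)).exists_norm_le.imp
      fun _ hC n => hC _ ⟨n, rfl⟩
  obtain ⟨M, hM⟩ := banach_steinhaus hpointwise
  exact isBoundedUnder_of ⟨M, fun n => by simpa using hM n⟩

theorem two_mul_inner_add_norm_sq_le {E : Type*} [NormedAddCommGroup E] [InnerProductSpace ℝ E]
    {d u e z : E} (h : d + u = e + z) (hz : ‖z‖ ≤ ‖d‖) :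
    2 * inner ℝ d u + ‖u‖ ^ 2 ≤ 2 * (‖e‖ * ‖d‖) + ‖e‖ ^ 2 := by
  have hle : ‖d + u‖ ≤ ‖e‖ + ‖d‖ := h ▸ (norm_add_le e z).trans (by linarith)
  have hsq : ‖d + u‖ ^ 2 ≤ (‖e‖ + ‖d‖) ^ 2 := pow_le_pow_left₀ (norm_nonneg _) hle 2
  rw [norm_add_sq_real] at hsq
  linarith

theorem demiclosedness_of_nonexpansive_general
    {H : Type*} [NormedAddCommGroup H] [InnerProductSpace ℝ H] [CompleteSpace H]
    (C : Set H)
    (T : H → H)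
    (hTne : ∀ x ∈ C, ∀ y ∈ C, ‖T x - T y‖ ≤ ‖x - y‖)
    (x : ℕ → H) (hxC : ∀ n, x n ∈ C) (xbar : H) (hxbar : xbar ∈ C)
    (hweak : ∀ w : H, Filter.Tendsto (fun n => (inner ℝ (x n) w : ℝ)) Filter.atTop
      (nhds (inner ℝ xbar w)))
    (y : H)
    (hstrong : Filter.Tendsto (fun n => x n - T (x n)) Filter.atTop (nhds y)) :
    xbar - T xbar = y := by
  set u := xbar - T xbar - y
  set d := fun n => x n - xbar
  set ε := fun n => ‖x n - T (x n) - y‖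
  have hd : ∀ w, Tendsto (fun n => inner ℝ (d n) w) atTop (𝓝 (inner ℝ (0 : H) w)) := fun w => by
    simpa [d, inner_sub_left] using (hweak w).sub_const (inner ℝ xbar w)
  have hε : Tendsto ε atTop (𝓝 0) := by
    simpa [ε] using (tendsto_sub_nhds_zero_iff.2 hstrong).norm
  have key : ∀ n, 2 * inner ℝ (d n) u + ‖u‖ ^ 2 ≤ 2 * (ε n * ‖d n‖) + ε n ^ 2 := fun n =>
    two_mul_inner_add_norm_sq_le (by simp only [d, u]; abel) (hTne _ (hxC n) _ hxbar)
  have hleft : Tendsto (fun n => 2 * inner ℝ (d n) u + ‖u‖ ^ 2) atTop (𝓝 (‖u‖ ^ 2)) := by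
    simpa using ((hd u).const_mul 2).add_const (‖u‖ ^ 2)
  have hbdd : IsBoundedUnder (· ≤ ·) atTop (fun n => ‖d n‖) :=
    isBoundedUnder_norm_of_tendsto_inner hd
  have hright : Tendsto (fun n => 2 * (ε n * ‖d n‖) + ε n ^ 2) atTop (𝓝 0) := by
    have hεd := hε.zero_mul_isBoundedUnder_le (g := fun n => ‖d n‖) (by simpa [Function.comp_def])
    simpa using (hεd.const_mul 2).add (hε.pow 2)
  have hu : ‖u‖ ^ 2 ≤ 0 := le_of_tendsto_of_tendsto' hleft hright key
  exact sub_eq_zero.1 (by simpa using le_antisymm hu (sq_nonneg ‖u‖))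

/-- If `T : C → C` is nonexpansive on a nonempty closed convex subset `C` of a real
Hilbert space, then `I - T` is demiclosed: if `xₙ ∈ C` converges weakly to `x ∈ C` and
`xₙ - T xₙ` converges strongly to `y`, then `x - T x = y`. -/
theorem demiclosedness_of_nonexpansive
    {H : Type*} [NormedAddCommGroup H] [InnerProductSpace ℝ H] [CompleteSpace H]
    (C : Set H) (hC : C.Nonempty) (hCclosed : IsClosed C) (hCconv : Convex ℝ C)
    (T : H → H) (hTmaps : ∀ x ∈ C, T x ∈ C)
    (hTne : ∀ x ∈ C, ∀ y ∈ C, ‖T x - T y‖ ≤ ‖x - y‖)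
    (hfix : ∃ x ∈ C, T x = x)
    (x : ℕ → H) (hxC : ∀ n, x n ∈ C) (xbar : H) (hxbar : xbar ∈ C)
    (hweak : ∀ w : H, Filter.Tendsto (fun n => (inner ℝ (x n) w : ℝ)) Filter.atTop
      (nhds (inner ℝ xbar w)))
    (y : H)
    (hstrong : Filter.Tendsto (fun n => x n - T (x n)) Filter.atTop (nhds y)) :
    xbar - T xbar = y :=
  demiclosedness_of_nonexpansive_general C T hTne x hxC xbar hxbar hweak y hstrong
end

section
/- Let {xₙ} be a sequence in a real Hilbert space and F a nonempty closed convex set with ‖xₙ − x₀‖ ≤ ‖u − x₀‖ for all u ∈ F and all n. If every weak cluster point of {xₙ} lies in F, then {xₙ} converges strongly to x† = P_F(x₀). -/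
/-!
Every subsequence of `(xₙ)` has a further subsequence converging weakly to some `z`, which lies in
`F` by hypothesis. Weak lower semicontinuity of the norm gives `‖z - x₀‖ ≤ ‖x† - x₀‖`, so `z` is
a nearest point of the convex set `F` to `x₀`, and by strict convexity `z = x†`. Since moreover
`‖xₙ - x₀‖ ≤ ‖x† - x₀‖`, the Kadec–Klee property of Hilbert spaces turns weak convergence of
`xₙ - x₀` into strong convergence. Hence every subsequence has a subsequence tending to `x†`.
-/

open Filter Topology

section WeakConvergence

variable {E : Type*} [NormedAddCommGroup E] [InnerProductSpace ℝ E]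

theorem exists_strictMono_tendsto_inner_of_norm_le [CompleteSpace E] {y : ℕ → E} {R : ℝ}
    (hy : ∀ n, ‖y n‖ ≤ R) :
    ∃ z : E, ∃ φ : ℕ → ℕ, StrictMono φ ∧
      ∀ w, Tendsto (fun n => inner ℝ (y (φ n)) w) atTop (𝓝 (inner ℝ z w)) := by
  -- Sequential Banach–Alaoglu in the separable Hilbert space `K` spanned by the sequence.
  set K := (Submodule.span ℝ (Set.range y)).topologicalClosure
  have : CompleteSpace K := (Submodule.isClosed_topologicalClosure _).completeSpace_coe
  have : TopologicalSpace.SeparableSpace K := by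
    refine TopologicalSpace.IsSeparable.separableSpace ?_
    rw [Submodule.topologicalClosure_coe]
    exact (Set.countable_range y).isSeparable.span.closure
  have hyK (n : ℕ) : y n ∈ K := Submodule.le_topologicalClosure _ (Submodule.subset_span ⟨n, rfl⟩)
  let f (n : ℕ) : WeakDual ℝ K :=
    StrongDual.toWeakDual (InnerProductSpace.toDual ℝ K ⟨y n, hyK n⟩)
  obtain ⟨ℓ, -, φ, hφ, hℓ⟩ :=
    WeakDual.isSeqCompact_closedBall ℝ K 0 R (x := f) fun n => by simpa [f] using hy n
  refine ⟨(InnerProductSpace.toDual ℝ K).symm (WeakDual.toStrongDual ℓ), φ, hφ, fun w => ?_⟩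
  convert ((WeakDual.eval_continuous (K.orthogonalProjectionOnto w)).tendsto ℓ).comp hℓ using 2
  · simp [f]
  · rw [← Submodule.inner_orthogonalProjectionOnto_eq_of_mem_left,
      InnerProductSpace.toDual_symm_apply]
    rfl

variable {ι : Type*} {l : Filter ι} {y : ι → E} {z : E}

theorem tendsto_inner_sub_const (h : ∀ w, Tendsto (fun i => inner ℝ (y i) w) l (𝓝 (inner ℝ z w)))
    (c : E) (w : E) :
    Tendsto (fun i => inner ℝ (y i - c) w) l (𝓝 (inner ℝ (z - c) w)) := by
  simpa only [inner_sub_left] using (h w).sub_const (inner ℝ c w)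

theorem norm_le_of_tendsto_inner [l.NeBot] {d : ℝ} (hy : ∀ᶠ i in l, ‖y i‖ ≤ d)
    (h : ∀ w, Tendsto (fun i => inner ℝ (y i) w) l (𝓝 (inner ℝ z w))) : ‖z‖ ≤ d := by
  have hz : ‖z‖ * ‖z‖ ≤ d * ‖z‖ := by
    rw [← real_inner_self_eq_norm_mul_norm]
    refine le_of_tendsto (h z) (hy.mono fun i hi => ?_)
    exact (real_inner_le_norm _ _).trans (mul_le_mul_of_nonneg_right hi (norm_nonneg z))
  have hd : 0 ≤ d := let ⟨i, hi⟩ := hy.exists; (norm_nonneg (y i)).trans hi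
  by_contra! hlt
  nlinarith

theorem tendsto_of_tendsto_inner_of_norm_le (hy : ∀ᶠ i in l, ‖y i‖ ≤ ‖z‖)
    (h : ∀ w, Tendsto (fun i => inner ℝ (y i) w) l (𝓝 (inner ℝ z w))) : Tendsto y l (𝓝 z) := by
  have hsq : Tendsto (fun i => ‖y i - z‖ ^ 2) l (𝓝 0) := by
    have hbound : Tendsto (fun i => 2 * ‖z‖ ^ 2 - 2 * inner ℝ (y i) z) l (𝓝 0) := by
      have := ((h z).const_mul 2).const_sub (2 * ‖z‖ ^ 2)
      rwa [real_inner_self_eq_norm_sq, sub_self] at this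
    refine tendsto_of_tendsto_of_tendsto_of_le_of_le' tendsto_const_nhds hbound
      (Eventually.of_forall fun i => sq_nonneg _) (hy.mono fun i hi => ?_)
    rw [norm_sub_sq_real]
    nlinarith [norm_nonneg (y i), norm_nonneg z]
  rw [tendsto_iff_norm_sub_tendsto_zero]
  simpa using hsq.sqrt

end WeakConvergence

theorem Convex.eq_of_isMinOn_norm_sub {E : Type*} [NormedAddCommGroup E] [NormedSpace ℝ E]
    [StrictConvexSpace ℝ E] {F : Set E} (hF : Convex ℝ F) {x₀ z z' : E} (hz : z ∈ F)
    (hz' : z' ∈ F) (hmin : IsMinOn (‖· - x₀‖) F z) (hmin' : IsMinOn (‖· - x₀‖) F z') :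
    z = z' := by
  have heq : ‖z - x₀‖ = ‖z' - x₀‖ := le_antisymm (hmin hz') (hmin' hz)
  by_contra hne
  have hmid : (1 / 2 : ℝ) • z + (1 / 2 : ℝ) • z' ∈ F :=
    hF hz hz' (by norm_num) (by norm_num) (by norm_num)
  have hlt : ‖(1 / 2 : ℝ) • ((z - x₀) + (z' - x₀))‖ < ‖z - x₀‖ :=
    (norm_midpoint_lt_iff heq).2 fun h => hne (sub_left_injective h)
  have hmid' : (1 / 2 : ℝ) • ((z - x₀) + (z' - x₀)) = (1 / 2 : ℝ) • z + (1 / 2 : ℝ) • z' - x₀ := by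
    module
  exact (hmin hmid).not_gt (hmid' ▸ hlt)

theorem strong_convergence_to_projection_general
    {H : Type*} [NormedAddCommGroup H] [InnerProductSpace ℝ H] [CompleteSpace H]
    (F : Set H) (hFconv : Convex ℝ F)
    (x₀ : H) (x : ℕ → H)
    (hbound : ∀ u ∈ F, ∀ n, ‖x n - x₀‖ ≤ ‖u - x₀‖)
    (hcluster : ∀ z : H, (∃ φ : ℕ → ℕ, StrictMono φ ∧
      ∀ w : H, Filter.Tendsto (fun n => (inner ℝ (x (φ n)) w : ℝ)) Filter.atTop
        (nhds (inner ℝ z w))) → z ∈ F)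
    (xdag : H) (hxdagF : xdag ∈ F)
    (hxdag : ∀ u ∈ F, ‖xdag - x₀‖ ≤ ‖u - x₀‖) :
    Filter.Tendsto x Filter.atTop (nhds xdag) := by
  have hle (n : ℕ) : ‖x n - x₀‖ ≤ ‖xdag - x₀‖ := hbound xdag hxdagF n
  refine tendsto_of_subseq_tendsto fun ns hns => ?_
  obtain ⟨ψ, -, hψ⟩ := strictMono_subseq_of_tendsto_atTop hns
  obtain ⟨z, φ, hφ, hweak⟩ := exists_strictMono_tendsto_inner_of_norm_le fun n =>
    (norm_le_norm_sub_add (x (ns (ψ n))) x₀).trans (add_le_add (hle _) le_rfl)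
  have hzF : z ∈ F := hcluster z ⟨_, hψ.comp hφ, hweak⟩
  have hweak₀ := tendsto_inner_sub_const hweak x₀
  have hz : ‖z - x₀‖ ≤ ‖xdag - x₀‖ :=
    norm_le_of_tendsto_inner (Eventually.of_forall fun _ => hle _) hweak₀
  obtain rfl : z = xdag := hFconv.eq_of_isMinOn_norm_sub hzF hxdagF
    (isMinOn_iff.2 fun u hu => hz.trans (hxdag u hu)) (isMinOn_iff.2 hxdag)
  refine ⟨ψ ∘ φ, ?_⟩
  simpa using (tendsto_of_tendsto_inner_of_norm_le
    (Eventually.of_forall fun _ => hle _) hweak₀).add_const x₀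

/-- Let `{xₙ}` be a sequence in a real Hilbert space and `F` a nonempty closed convex
set with `‖xₙ - x₀‖ ≤ ‖u - x₀‖` for all `u ∈ F` and all `n`. If every weak cluster
point of `{xₙ}` lies in `F`, then `{xₙ}` converges strongly to `x† = P_F x₀`. -/
theorem strong_convergence_to_projection
    {H : Type*} [NormedAddCommGroup H] [InnerProductSpace ℝ H] [CompleteSpace H]
    (F : Set H) (hF : F.Nonempty) (hFclosed : IsClosed F) (hFconv : Convex ℝ F)
    (x₀ : H) (x : ℕ → H)
    (hbound : ∀ u ∈ F, ∀ n, ‖x n - x₀‖ ≤ ‖u - x₀‖)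
    (hcluster : ∀ z : H, (∃ φ : ℕ → ℕ, StrictMono φ ∧
      ∀ w : H, Filter.Tendsto (fun n => (inner ℝ (x (φ n)) w : ℝ)) Filter.atTop
        (nhds (inner ℝ z w))) → z ∈ F)
    (xdag : H) (hxdagF : xdag ∈ F)
    (hxdag : ∀ u ∈ F, ‖xdag - x₀‖ ≤ ‖u - x₀‖) :
    Filter.Tendsto x Filter.atTop (nhds xdag) :=
  strong_convergence_to_projection_general F hFconv x₀ x hbound hcluster xdag hxdagF hxdag
end
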